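/- Let v_H = 4Y⁴, v_P = −2XY³, v_E = 2X³Y + 2XY³, the tangent vectors at f = Y²(X²+Y²) to its PSL(2,R)-orbit. Then v_H is a q-null vector orthogonal to v_H, v_P, v_E, and the induced form on span{v_H, v_P, v_E}/R·v_H has signature (1,1); hence the tangent space has signature (1,1,1). -/

import Mathlib

/-- Coefficient convention: `a 0, a 1, a 2, a 3, a 4` are the coefficients of
`X⁴, X³Y, X²Y², XY³, Y⁴` respectively (so `a 0 = a₄, …, a 4 = a₀` in the paper's notation). -/
noncomputable def qq (a : Fin 5 → ℝ) : ℝ := 2 * a 0 * a 4 - (1/2) * a 3 * a 1 + (1/6) * (a 2)^2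

/-- The polarization of `qq`. -/
noncomputable def bb (f g : Fin 5 → ℝ) : ℝ := (1/2) * (qq (f + g) - qq f - qq g)

/-- Evaluation of the quartic with coefficient vector `a` at `(x, y)`. -/
noncomputable def ev (a : Fin 5 → ℝ) (x y : ℝ) : ℝ :=
  a 0 * x^4 + a 1 * x^3 * y + a 2 * x^2 * y^2 + a 3 * x * y^3 + a 4 * y^4

/-!
`B(Y⁴, g)` is a multiple of the `X⁴`-coefficient of `g`, which vanishes on all three tangent
vectors, so `v_H` lies in the radical of `B` on their span. On the quotient, `v_E` and
`2 v_P + v_E = 2X³Y − 2XY³` are `B`-orthogonal with `q`-values `−2` and `2`.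
-/

open Submodule

theorem Submodule.span_triple_smul_add_eq {K V : Type*} [DivisionRing K] [AddCommGroup V]
    [Module K V] {r : K} (hr : r ≠ 0) (a b c : V) :
    span K {a, c, r • b + c} = span K {a, b, c} := by
  apply le_antisymm <;> rw [span_le, Set.insert_subset_iff, Set.insert_subset_iff,
    Set.singleton_subset_iff]
  · exact ⟨subset_span (by simp), subset_span (by simp),
      add_mem (smul_mem _ _ (subset_span (by simp))) (subset_span (by simp))⟩
  · refine ⟨subset_span (by simp), ?_, subset_span (by simp)⟩
    have hb : r⁻¹ • ((r • b + c) - c) ∈ span K {a, c, r • b + c} :=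
      smul_mem _ _ (sub_mem (subset_span (by simp)) (subset_span (by simp)))
    rwa [add_sub_cancel_right, inv_smul_smul₀ hr] at hb

theorem finrank_span_triple_eq_three {K V : Type*} [DivisionRing K] [AddCommGroup V]
    [Module K V] {a b c : V} (h : LinearIndependent K ![a, b, c]) :
    Module.finrank K (span K {a, b, c}) = 3 := by
  rw [← Set.singleton_union, ← Matrix.range_cons_cons_empty b c ![], ← Matrix.range_cons,
    finrank_span_eq_card h, Fintype.card_fin]

theorem bb_eq (f g : Fin 5 → ℝ) :
    bb f g = f 0 * g 4 + f 4 * g 0 - (f 1 * g 3 + f 3 * g 1) / 4 + f 2 * g 2 / 6 := by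
  simp only [bb, qq, Pi.add_apply]
  ring

theorem bb_Y4_left (c : ℝ) (g : Fin 5 → ℝ) : bb ![0, 0, 0, 0, c] g = c * g 0 := by
  simp [bb_eq]

theorem linearIndependent_tangentVectors :
    LinearIndependent ℝ ![(![0, 0, 0, 0, 4] : Fin 5 → ℝ), ![0, 0, 0, -2, 0], ![0, 2, 0, 2, 0]] := by
  rw [Fintype.linearIndependent_iff]
  intro g hg
  have h0 : g 0 = 0 := by simpa [Fin.sum_univ_three] using congrFun hg 4
  have h2 : g 2 = 0 := by simpa [Fin.sum_univ_three] using congrFun hg 1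
  have h1 : g 1 = 0 := by simpa [Fin.sum_univ_three, h2] using congrFun hg 3
  intro i
  fin_cases i <;> assumption

/-- For the tangent vectors `v_H = 4Y⁴`, `v_P = −2XY³`, `v_E = 2X³Y + 2XY³` at
`f = Y²(X²+Y²)`: `v_H` is `q`-null and `B`-orthogonal to `v_H, v_P, v_E`, and the form
induced on `span{v_H, v_P, v_E}/ℝ·v_H` has signature (1,1); hence the tangent space has
signature (1,1,1). -/
theorem stmt_15 :
    let vH : Fin 5 → ℝ := ![0, 0, 0, 0, 4]
    let vP : Fin 5 → ℝ := ![0, 0, 0, -2, 0]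
    let vE : Fin 5 → ℝ := ![0, 2, 0, 2, 0]
    qq vH = 0 ∧ bb vH vH = 0 ∧ bb vH vP = 0 ∧ bb vH vE = 0 ∧
    (∀ x ∈ Submodule.span ℝ {vH, vP, vE}, bb vH x = 0) ∧
    ∃ u w : Fin 5 → ℝ,
      u ∈ Submodule.span ℝ {vH, vP, vE} ∧ w ∈ Submodule.span ℝ {vH, vP, vE} ∧
      bb u w = 0 ∧ qq u < 0 ∧ 0 < qq w ∧
      Submodule.span ℝ {vH, u, w} = Submodule.span ℝ {vH, vP, vE} ∧
      Module.finrank ℝ (Submodule.span ℝ {vH, vP, vE}) = 3 := by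
  intro vH vP vE
  have hX4 : span ℝ {vH, vP, vE} ≤ LinearMap.ker (LinearMap.proj 0 : (Fin 5 → ℝ) →ₗ[ℝ] ℝ) := by
    rw [span_le, Set.insert_subset_iff, Set.insert_subset_iff, Set.singleton_subset_iff]
    simp [vH, vP, vE]
  have hspan : span ℝ {vH, vE, (2 : ℝ) • vP + vE} = span ℝ {vH, vP, vE} :=
    span_triple_smul_add_eq two_ne_zero vH vP vE
  have hrad : ∀ x ∈ span ℝ {vH, vP, vE}, bb vH x = 0 := fun x hx => by
    rw [bb_Y4_left, show x 0 = 0 from hX4 hx, mul_zero]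
  refine ⟨by simp [qq, vH], hrad _ (subset_span (by simp)), hrad _ (subset_span (by simp)),
    hrad _ (subset_span (by simp)), hrad, vE, (2 : ℝ) • vP + vE,
    subset_span (by simp), hspan ▸ subset_span (by simp), by simp [bb_eq, vP, vE]; norm_num,
    by simp [qq, vE], by simp [qq, vP, vE]; norm_num, hspan,
    finrank_span_triple_eq_three linearIndependent_tangentVectors⟩
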